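/- arXiv:2102.00983 — 7 statements merged into one kernel-verified Lean document; each statement's English description precedes it below -/
import Mathlib

section
/- Let (D_α)_{α∈A} be a mosaic of GDDs of constant block size k on a point set of size v with b block indices and a = |A| colors. Then b ≥ a², with equality if and only if every D_α is a transversal design with k point classes of size a each and λ₂ = 1 and λ₁ = 0. -/
/-!
Fix a colour `α` and a point `x`. Counting the pairs `(y, s)` with `y ≠ x` and `s` a block
of `D_α` through both gives `r (k - 1) = λ₁ (u - 1) + λ₂ (v - u)`, and counting colours along
a row or a column of the mosaic gives `v = a k` and `b = a r`. If `λ₁ ≥ 1`, the right-hand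
side is at least `v - 1 > a (k - 1)`, so `r > a`. If `λ₁ = 0`, every block is a partial
transversal of the point classes, so `k ≤ m`, and
`a k (k - 1) = m u (k - 1) ≤ u k (m - 1) ≤ λ₂ u (m - 1) k = r k (k - 1)`.
Hence `r ≥ a`, with equality exactly when `m = k` and `λ₂ = 1`; then `u = a`, and a block of
size `m` meeting each of the `m` classes at most once meets each exactly once.
Finally `b = a r ≥ a²`.
-/

open Finset

section Counting

variable {X Y : Type*} [Fintype Y] [DecidableEq Y]

lemma card_eq_mul_of_card_fiber_eq [Fintype X] (g : X → Y) {n : ℕ}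
    (hg : ∀ y, #{x | g x = y} = n) : Fintype.card X = Fintype.card Y * n := by
  rw [← card_univ, card_eq_sum_card_fiberwise (fun x _ => mem_univ (g x))]
  simp [hg]

lemma card_filter_eq_one_of_injOn {s : Finset X} {g : X → Y} (hg : Set.InjOn g s)
    (hs : #s = Fintype.card Y) (y : Y) : #{x ∈ s | g x = y} = 1 := by
  have himage : s.image g = univ := eq_univ_of_card _ (by rw [card_image_of_injOn hg, hs])
  obtain ⟨x, hx, rfl⟩ := mem_image.mp (himage ▸ mem_univ y)
  refine card_eq_one.mpr ⟨x, ?_⟩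
  ext x'
  simp only [mem_filter, mem_singleton]
  exact ⟨fun ⟨hx', h⟩ => hg hx' hx h, fun h => ⟨h ▸ hx, h ▸ rfl⟩⟩

end Counting

namespace GDD

/- A design is an incidence relation `inc x s` between points and block indices; the member
`D_α` of the mosaic is `fun x s => f x s = α`. -/
variable {X S G : Type*} [Fintype X] [Fintype S]
  (inc : X → S → Prop) [∀ x s, Decidable (inc x s)]

lemma sum_card_common_blocks [DecidableEq X] {k r : ℕ} (hk : ∀ s, #{x | inc x s} = k) {x : X}
    (hr : #{s | inc x s} = r) :
    ∑ y ∈ univ.erase x, #{s | inc x s ∧ inc y s} = r * (k - 1) := by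
  have hcount (s : S) :
      #{y ∈ univ.erase x | inc x s ∧ inc y s} = if inc x s then k - 1 else 0 := by
    split_ifs with hs
    · rw [filter_erase, filter_congr fun y _ => and_iff_right hs,
        card_erase_of_mem (by simpa using hs), hk]
    · simp [hs]
  calc ∑ y ∈ univ.erase x, #{s | inc x s ∧ inc y s}
      = ∑ s, #{y ∈ univ.erase x | inc x s ∧ inc y s} :=
        sum_card_bipartiteAbove_eq_sum_card_bipartiteBelow (fun y s => inc x s ∧ inc y s)
    _ = r * (k - 1) := by
        simp only [hcount, sum_ite, sum_const_zero, add_zero, sum_const, smul_eq_mul, hr]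

variable {inc} (cls : X → G)

lemma replication_identity [DecidableEq X] [DecidableEq G] {k r u lam1 lam2 : ℕ}
    (hk : ∀ s, #{x | inc x s} = k) {x : X} (hr : #{s | inc x s} = r)
    (hu : #{y | cls y = cls x} = u)
    (hl1 : ∀ x y, x ≠ y → cls x = cls y → #{s | inc x s ∧ inc y s} = lam1)
    (hl2 : ∀ x y, cls x ≠ cls y → #{s | inc x s ∧ inc y s} = lam2) :
    r * (k - 1) = lam1 * (u - 1) + lam2 * (Fintype.card X - u) := by
  have hsame : #{y ∈ univ.erase x | cls y = cls x} = u - 1 := by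
    rw [filter_erase, card_erase_of_mem (by simp), hu]
  have hother : #{y ∈ univ.erase x | ¬cls y = cls x} = Fintype.card X - u := by
    rw [filter_erase, erase_eq_of_notMem (by simp), filter_not, card_sdiff_of_subset
      (filter_subset _ _), card_univ, hu]
  rw [← sum_card_common_blocks inc hk hr,
    ← sum_filter_add_sum_filter_not _ (fun y => cls y = cls x),
    sum_const_nat (m := lam1), sum_const_nat (m := lam2), hsame, hother, mul_comm, mul_comm lam2]
  · intro y hy
    exact hl2 x y (Ne.symm (mem_filter.mp hy).2)
  · intro y hy
    obtain ⟨hyx, hcls⟩ := mem_filter.mp hy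
    exact hl1 x y (ne_of_mem_erase hyx).symm hcls.symm

lemma injOn_of_lam1_eq_zero
    (hl1 : ∀ x y, x ≠ y → cls x = cls y → #{s | inc x s ∧ inc y s} = 0) (s : S) :
    Set.InjOn cls ({x | inc x s} : Finset X) := by
  intro x hx y hy hxy
  by_contra hne
  have hempty := hl1 x y hne hxy
  rw [card_eq_zero, filter_eq_empty_iff] at hempty
  exact hempty (mem_univ s) ⟨by simpa using hx, by simpa using hy⟩

lemma card_block_le_of_lam1_eq_zero [Fintype G]
    (hl1 : ∀ x y, x ≠ y → cls x = cls y → #{s | inc x s ∧ inc y s} = 0) (s : S) :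
    #{x | inc x s} ≤ Fintype.card G :=
  card_le_card_of_injOn cls (fun _ _ => mem_univ _) (injOn_of_lam1_eq_zero cls hl1 s)

section Parameters

variable {a k r m u v lam1 lam2 : ℕ}

lemma replication_mul_pred_pos (hD : r * (k - 1) = lam1 * (u - 1) + lam2 * (v - u))
    (hv : v = m * u) (hm : 2 ≤ m) (hu : 1 ≤ u) (hl2 : 1 ≤ lam2) : 0 < r * (k - 1) := by
  have : u < v := by nlinarith
  rw [hD]
  exact Nat.add_pos_right _ (Nat.mul_pos hl2 (Nat.sub_pos_of_lt this))

lemma lt_replication_of_lam1_pos (hD : r * (k - 1) = lam1 * (u - 1) + lam2 * (v - u))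
    (hvk : v = a * k) (ha : 2 ≤ a) (hu : 1 ≤ u) (huv : u ≤ v) (hl1 : 1 ≤ lam1)
    (hl2 : 1 ≤ lam2) : a < r := by
  have hk : 1 ≤ k := by nlinarith
  have hak : a ≤ a * k := Nat.le_mul_of_pos_right a hk
  have : a * (k - 1) < r * (k - 1) := by
    calc a * (k - 1) < v - 1 := by rw [hvk, Nat.mul_sub_one]; omega
      _ = (u - 1) + (v - u) := by omega
      _ ≤ lam1 * (u - 1) + lam2 * (v - u) := by gcongr <;> exact Nat.le_mul_of_pos_left _ ‹_›
      _ = r * (k - 1) := hD.symm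
  exact Nat.lt_of_mul_lt_mul_right this

lemma le_replication_of_lam1_eq_zero (hD : r * (k - 1) = lam2 * (v - u))
    (hvk : v = a * k) (hv : v = m * u) (hkm : k ≤ m) (hk : 2 ≤ k) (hu : 1 ≤ u)
    (hl2 : 1 ≤ lam2) : a ≤ r ∧ (r = a → m = k ∧ u = a ∧ lam2 = 1) := by
  obtain ⟨k, rfl⟩ : ∃ k', k = k' + 1 := ⟨k - 1, by omega⟩
  obtain ⟨m, rfl⟩ : ∃ m', m = m' + 1 := ⟨m - 1, by omega⟩
  have hvu : v - u = m * u := by rw [hv, add_mul, one_mul, Nat.add_sub_cancel]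
  rw [Nat.add_sub_cancel, hvu] at hD
  have hcross : (m + 1) * k ≤ m * (k + 1) := by linarith
  have hlam : m * u * (k + 1) ≤ lam2 * (m * u) * (k + 1) :=
    Nat.mul_le_mul_right _ (Nat.le_mul_of_pos_left _ hl2)
  have hchain : a * k * (k + 1) ≤ r * k * (k + 1) := by
    calc a * k * (k + 1) = (m + 1) * k * u := by rw [mul_right_comm, ← hvk, hv]; ring
      _ ≤ m * (k + 1) * u := by gcongr
      _ = m * u * (k + 1) := by ring
      _ ≤ lam2 * (m * u) * (k + 1) := hlam
      _ = r * k * (k + 1) := by rw [hD]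
  refine ⟨le_of_mul_le_mul_right (le_of_mul_le_mul_right hchain (by omega)) (by omega),
    fun hra => ?_⟩
  subst hra
  have hmk : m = k := by nlinarith
  subst hmk
  have hua : u = r := by nlinarith
  refine ⟨rfl, hua, ?_⟩
  nlinarith

lemma le_replication (hD : r * (k - 1) = lam1 * (u - 1) + lam2 * (v - u))
    (hvk : v = a * k) (hv : v = m * u) (ha : 2 ≤ a) (hm : 2 ≤ m) (hu : 1 ≤ u)
    (hl2 : 1 ≤ lam2) (hkm : lam1 = 0 → k ≤ m) :
    a ≤ r ∧ (r = a ↔ m = k ∧ u = a ∧ lam1 = 0 ∧ lam2 = 1) := by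
  have hk : 2 ≤ k := by
    have := Nat.pos_of_mul_pos_left (replication_mul_pred_pos hD hv hm hu hl2)
    omega
  rcases Nat.eq_zero_or_pos lam1 with hl1 | hl1
  · rw [hl1, zero_mul, zero_add] at hD
    obtain ⟨hle, hparams⟩ := le_replication_of_lam1_eq_zero hD hvk hv (hkm hl1) hk hu hl2
    refine ⟨hle, fun hra => ?_, fun ⟨_, hua, _, hl2⟩ => ?_⟩
    · obtain ⟨hmk, hua, hl2⟩ := hparams hra
      exact ⟨hmk, hua, hl1, hl2⟩
    · have hrk : r * (k - 1) = a * (k - 1) := by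
        rw [hD, hl2, one_mul, hvk, hua, Nat.mul_sub_one]
      exact Nat.eq_of_mul_eq_mul_right (by omega) hrk
  · have hlt := lt_replication_of_lam1_pos hD hvk ha hu (by nlinarith) hl1 hl2
    exact ⟨hlt.le, fun hra => absurd hra hlt.ne', fun h => absurd h.2.2.1 hl1.ne'⟩

end Parameters

end GDD

/-- For a (nontrivial) mosaic of GDDs of constant block size `k`, the number of block indices
satisfies `b ≥ a²`, with equality iff every member is a transversal design with `k` point
classes of size `a`, `λ₁ = 0` and `λ₂ = 1` (every block meets every point class in exactly
one point). -/
theorem mosaic_gdd_block_lower_bound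
    {X S A : Type*} [Fintype X] [Fintype S] [Fintype A] [DecidableEq A] [Nonempty X]
    (f : X → S → A) (k r : ℕ)
    (m u lam1 lam2 : A → ℕ) (cls : ∀ α : A, X → Fin (m α))
    (ha : 2 ≤ Fintype.card A)
    (hm2 : ∀ α : A, 2 ≤ m α)
    (hu : ∀ (α : A) (i : Fin (m α)),
      (Finset.univ.filter (fun x => cls α x = i)).card = u α)
    (hlam2 : ∀ α : A, 1 ≤ lam2 α)
    (hk : ∀ (α : A) (s : S), (Finset.univ.filter (fun x => f x s = α)).card = k)
    (hr : ∀ (α : A) (x : X), (Finset.univ.filter (fun s => f x s = α)).card = r)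
    (hl1 : ∀ (α : A) (x y : X), x ≠ y → cls α x = cls α y →
      (Finset.univ.filter (fun s => f x s = α ∧ f y s = α)).card = lam1 α)
    (hl2 : ∀ (α : A) (x y : X), cls α x ≠ cls α y →
      (Finset.univ.filter (fun s => f x s = α ∧ f y s = α)).card = lam2 α) :
    Fintype.card S ≥ Fintype.card A ^ 2 ∧
      (Fintype.card S = Fintype.card A ^ 2 ↔
        ∀ α : A, m α = k ∧ u α = Fintype.card A ∧ lam1 α = 0 ∧ lam2 α = 1 ∧
          ∀ (s : S) (i : Fin (m α)),
            (Finset.univ.filter (fun x => f x s = α ∧ cls α x = i)).card = 1) := by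
  have : DecidableEq X := Classical.decEq X
  obtain ⟨x₀⟩ := ‹Nonempty X›
  obtain ⟨α₀⟩ : Nonempty A := Fintype.card_pos_iff.mp (by omega)
  have hv (α : A) : Fintype.card X = m α * u α := by
    simpa using card_eq_mul_of_card_fiber_eq (cls α) (hu α)
  have hu1 (α : A) : 1 ≤ u α := Nat.pos_of_mul_pos_left (hv α ▸ Fintype.card_pos)
  have hD (α : A) :=
    GDD.replication_identity (cls α) (hk α) (hr α x₀) (hu α _) (hl1 α) (hl2 α)
  obtain ⟨s₀, -⟩ : (univ.filter fun s => f x₀ s = α₀).Nonempty := by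
    rw [← card_pos, hr]
    exact Nat.pos_of_mul_pos_right (GDD.replication_mul_pred_pos (hD α₀) (hv α₀) (hm2 α₀)
      (hu1 α₀) (hlam2 α₀))
  have hvk : Fintype.card X = Fintype.card A * k := card_eq_mul_of_card_fiber_eq _ (hk · s₀)
  have hb : Fintype.card S = Fintype.card A * r := card_eq_mul_of_card_fiber_eq _ (hr · x₀)
  have hcolor (α : A) := GDD.le_replication (hD α) hvk (hv α) ha (hm2 α) (hu1 α) (hlam2 α)
    fun h0 => by
      have := GDD.card_block_le_of_lam1_eq_zero (cls α) (h0 ▸ hl1 α) s₀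
      rwa [Fintype.card_fin, hk] at this
  refine ⟨by rw [hb, sq]; exact Nat.mul_le_mul_left _ (hcolor α₀).1, ?_⟩
  rw [hb, sq, Nat.mul_left_cancel_iff (by omega)]
  constructor
  · intro hra α
    obtain ⟨hmk, hua, h0, hl⟩ := (hcolor α).2.1 hra
    refine ⟨hmk, hua, h0, hl, fun s i => ?_⟩
    rw [← filter_filter]
    exact card_filter_eq_one_of_injOn (GDD.injOn_of_lam1_eq_zero (cls α) (h0 ▸ hl1 α) s)
      (by rw [hk, Fintype.card_fin, hmk]) i
  · intro h
    obtain ⟨hmk, hua, h0, hl, -⟩ := h α₀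
    exact (hcolor α₀).2.2 ⟨hmk, hua, h0, hl⟩
end

section
/- Let D be a resolvable (v,k,r) tactical configuration with parallel classes indexed by a set R and blocks within each parallel class indexed by a set A, and let L be a quasigroup on A. Define, for each α ∈ A, the incidence structure D_α on the same point set and block index set R×A by: p is incident with (i,β) in D_α iff p is incident in D with (i,γ) for the unique γ with L(β,γ)=α. Then (D_α)_{α∈A} is a mosaic, and each D_α is isomorphic to D. -/
/-! For fixed `α`, the quasigroup axioms make `β ↦ β \ α` (the unique `γ` with `L β γ = α`) a
permutation of `A`, and `D_α` is `D` with the block `(i, β)` relabelled as `(i, β \ α)`; hence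
`D_α ≅ D`. Conversely, since a point `p` lies in exactly one block `(i, γ)` of the class `i`, it
is incident with `(i, β)` in `D_α` exactly when `α = L β γ`, which gives the mosaic property. -/

section LeftDivision

variable {A : Type*} {L : A → A → A}

/-- The left division `β \ α` of the quasigroup `L`. -/
noncomputable def quasigroupLeftDiv (hL : ∀ β α : A, ∃! γ, L β γ = α) (β α : A) : A :=
  (hL β α).exists.choose

theorem mul_quasigroupLeftDiv (hL : ∀ β α : A, ∃! γ, L β γ = α) (β α : A) :
    L β (quasigroupLeftDiv hL β α) = α :=
  (hL β α).exists.choose_spec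

theorem eq_quasigroupLeftDiv_iff (hL : ∀ β α : A, ∃! γ, L β γ = α) {β α γ : A} :
    γ = quasigroupLeftDiv hL β α ↔ L β γ = α :=
  ⟨fun h => h ▸ mul_quasigroupLeftDiv hL β α,
    fun h => (hL β α).unique h (mul_quasigroupLeftDiv hL β α)⟩

theorem quasigroupLeftDiv_bijective (hL : ∀ β α : A, ∃! γ, L β γ = α)
    (hR : ∀ γ α : A, ∃! β, L β γ = α) (α : A) :
    Function.Bijective (quasigroupLeftDiv hL · α) := by
  refine ⟨fun β β' (h : quasigroupLeftDiv hL β α = quasigroupLeftDiv hL β' α) => ?_, fun γ => ?_⟩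
  · exact (hR _ α).unique (mul_quasigroupLeftDiv hL β α) (h ▸ mul_quasigroupLeftDiv hL β' α)
  · obtain ⟨β, hβ, -⟩ := hR γ α
    exact ⟨β, ((eq_quasigroupLeftDiv_iff hL).2 hβ).symm⟩

end LeftDivision

section QuasigroupMosaic

variable {P R A : Type*} {I : P → R × A → Prop} {L : A → A → A} {J : A → P → R × A → Prop}

theorem quasigroupMosaic_iff_mul_eq (hJ : ∀ α p i β, J α p (i, β) ↔ ∃ γ, L β γ = α ∧ I p (i, γ))
    (hres : ∀ p i, ∃! β, I p (i, β)) {p : P} {i : R} {γ : A} (hγ : I p (i, γ)) (α β : A) :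
    J α p (i, β) ↔ L β γ = α := by
  rw [hJ]
  exact ⟨fun ⟨γ', hγ', hIγ'⟩ => (hres p i).unique hIγ' hγ ▸ hγ', fun h => ⟨γ, h, hγ⟩⟩

theorem quasigroupMosaic_existsUnique
    (hJ : ∀ α p i β, J α p (i, β) ↔ ∃ γ, L β γ = α ∧ I p (i, γ))
    (hres : ∀ p i, ∃! β, I p (i, β)) (p : P) (s : R × A) : ∃! α, J α p s := by
  obtain ⟨i, β⟩ := s
  obtain ⟨γ, hγ, -⟩ := hres p i
  simp only [quasigroupMosaic_iff_mul_eq hJ hres hγ, existsUnique_eq']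

theorem quasigroupMosaic_nonempty [Nonempty P] [Nonempty R]
    (hJ : ∀ α p i β, J α p (i, β) ↔ ∃ γ, L β γ = α ∧ I p (i, γ))
    (hres : ∀ p i, ∃! β, I p (i, β)) (hR : ∀ γ α : A, ∃! β, L β γ = α) (α : A) :
    ∃ p s, J α p s := by
  obtain ⟨p⟩ := ‹Nonempty P›
  obtain ⟨i⟩ := ‹Nonempty R›
  obtain ⟨γ, hγ, -⟩ := hres p i
  obtain ⟨β, hβ, -⟩ := hR γ α
  exact ⟨p, (i, β), (quasigroupMosaic_iff_mul_eq hJ hres hγ α β).2 hβ⟩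

theorem quasigroupMosaic_iff_relabel
    (hJ : ∀ α p i β, J α p (i, β) ↔ ∃ γ, L β γ = α ∧ I p (i, γ))
    (hL : ∀ β α : A, ∃! γ, L β γ = α) (α : A) (p : P) (i : R) (β : A) :
    J α p (i, β) ↔ I p (i, quasigroupLeftDiv hL β α) := by
  simp only [hJ, ← eq_quasigroupLeftDiv_iff hL, exists_eq_left]

end QuasigroupMosaic

theorem mosaic_from_resolvable_and_quasigroup_general
    {P R A : Type*}
    [Nonempty P] [Nonempty R]
    (I : P → R × A → Prop)
    (hres : ∀ (p : P) (i : R), ∃! β : A, I p (i, β))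
    (L : A → A → A)
    (hq1 : ∀ α γ : A, ∃! β : A, L α β = γ)
    (hq2 : ∀ β γ : A, ∃! α : A, L α β = γ)
    (J : A → P → R × A → Prop)
    (hJ : ∀ (α : A) (p : P) (i : R) (β : A),
      J α p (i, β) ↔ ∃ γ : A, L β γ = α ∧ I p (i, γ)) :
    (∀ (p : P) (s : R × A), ∃! α : A, J α p s) ∧
    (∀ α : A, ∃ p s, J α p s) ∧
    (∀ α : A, ∃ (e : P ≃ P) (g : (R × A) ≃ (R × A)),
      ∀ (p : P) (s : R × A), J α p s ↔ I (e p) (g s)) := by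
  refine ⟨quasigroupMosaic_existsUnique hJ hres, quasigroupMosaic_nonempty hJ hres hq2,
    fun α => ⟨Equiv.refl P,
      (Equiv.refl R).prodCongr (Equiv.ofBijective _ (quasigroupLeftDiv_bijective hq1 hq2 α)), ?_⟩⟩
  rintro p ⟨i, β⟩
  exact quasigroupMosaic_iff_relabel hJ hq1 α p i β

/-- General construction of a mosaic from a resolvable tactical configuration and a
quasigroup: defining `D_α` by `p I_α (i,β)` iff `p I (i,γ)` for the unique `γ` with
`L β γ = α`, the family `(D_α)` is a mosaic and every member is isomorphic to `D`. -/
theorem mosaic_from_resolvable_and_quasigroup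
    {P R A : Type*} [Fintype P] [Fintype R] [Fintype A] [DecidableEq A]
    [Nonempty P] [Nonempty R]
    (I : P → R × A → Prop) [∀ p s, Decidable (I p s)] (k r : ℕ)
    (hk : ∀ s : R × A, (Finset.univ.filter (fun p => I p s)).card = k)
    (hr : ∀ p : P, (Finset.univ.filter (fun s => I p s)).card = r)
    (hres : ∀ (p : P) (i : R), ∃! β : A, I p (i, β))
    (L : A → A → A)
    (hq1 : ∀ α γ : A, ∃! β : A, L α β = γ)
    (hq2 : ∀ β γ : A, ∃! α : A, L α β = γ)
    (J : A → P → R × A → Prop)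
    (hJ : ∀ (α : A) (p : P) (i : R) (β : A),
      J α p (i, β) ↔ ∃ γ : A, L β γ = α ∧ I p (i, γ)) :
    (∀ (p : P) (s : R × A), ∃! α : A, J α p s) ∧
    (∀ α : A, ∃ p s, J α p s) ∧
    (∀ α : A, ∃ (e : P ≃ P) (g : (R × A) ≃ (R × A)),
      ∀ (p : P) (s : R × A), J α p s ↔ I (e p) (g s)) :=
  mosaic_from_resolvable_and_quasigroup_general I hres L hq1 hq2 J hJ
end

section
/- Let f: X × S → A be the functional form of a mosaic of (v,k,λ) BIBDs. Then f is an optimally universal hash function: for all distinct x, x' ∈ X, |{s ∈ S : f(x,s) = f(x',s)}| / |S| = (v-a)/(a(v-1)), where a = |A| = v/k. -/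
/-!
Counting the pairs `(z, s)` with `z ≠ x` and `f z s = f x s` in two ways: every `s` contributes
`k - 1` (the other points of the block of `x`), and every `z ≠ x` contributes its number of
collisions with `x`, which is `a λ` (one `λ` for each of the `a` designs). Hence
`|S| (k - 1) = (v - 1) a λ`, and with `v = a k` the collision probability `a λ / |S|` is
`(k - 1) / (v - 1) = (v - a) / (a (v - 1))`.
-/

open Finset

theorem Fintype.card_eq_card_mul_of_forall_card_fiber_eq {β A : Type*} [Fintype β] [Fintype A]
    [DecidableEq A] {g : β → A} {n : ℕ} (h : ∀ α, #{b | g b = α} = n) :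
    Fintype.card β = Fintype.card A * n := by
  rw [← card_univ, card_eq_sum_card_fiberwise (f := g) (t := univ) (by simp)]
  simp [h]

theorem card_filter_eq_eq_sum_card_filter_and {S A : Type*} [Fintype S] [Fintype A]
    [DecidableEq A] (g h : S → A) :
    #{s | g s = h s} = ∑ α, #{s | g s = α ∧ h s = α} := by
  rw [card_eq_sum_card_fiberwise (f := g) (t := univ) (by simp)]
  refine sum_congr rfl fun α _ => congrArg card ?_
  ext s
  simp only [mem_filter, mem_univ, true_and]
  grind

theorem card_mul_sub_one_eq_card_sub_one_mul {X S A : Type*} [Fintype X] [Fintype S]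
    [DecidableEq A] (f : X → S → A) {k c : ℕ} (x : X)
    (hk : ∀ α s, #{z | f z s = α} = k) (hc : ∀ z, z ≠ x → #{s | f z s = f x s} = c) :
    Fintype.card S * (k - 1) = (Fintype.card X - 1) * c := by
  classical
  have h := card_mul_eq_card_mul (fun z s => f z s = f x s) (s := univ.erase x) (t := univ)
    (m := c) (n := k - 1) (fun z hz => hc z (ne_of_mem_erase hz)) fun s _ => by
      rw [bipartiteBelow, filter_erase, card_erase_of_mem (by simp), hk]
  rwa [card_erase_of_mem (mem_univ x), card_univ, card_univ, eq_comm] at h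

theorem mosaic_bibd_optimally_universal_general
    {X S A : Type*} [Fintype X] [Fintype S] [Fintype A] [DecidableEq A]
    (f : X → S → A) (k lam : ℕ)
    (hlam : 1 ≤ lam)
    (hk : ∀ (α : A) (s : S), (Finset.univ.filter (fun x => f x s = α)).card = k)
    (hl : ∀ (α : A) (x y : X), x ≠ y →
      (Finset.univ.filter (fun s => f x s = α ∧ f y s = α)).card = lam) :
    ∀ x y : X, x ≠ y →
      ((Finset.univ.filter (fun s => f x s = f y s)).card : ℝ) / (Fintype.card S : ℝ)
        = ((Fintype.card X : ℝ) - (Fintype.card A : ℝ))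
          / ((Fintype.card A : ℝ) * ((Fintype.card X : ℝ) - 1)) := by
  intro x y hxy
  rcases isEmpty_or_nonempty A with hA | hA
  -- then `S` is empty too, and both sides are the junk value `_ / 0 = 0`
  · have : IsEmpty S := ⟨fun s => hA.elim (f x s)⟩
    simp
  have hcol : ∀ u w : X, u ≠ w → #{s | f u s = f w s} = Fintype.card A * lam := fun u w huw => by
    simp [card_filter_eq_eq_sum_card_filter_and, hl _ u w huw]
  obtain ⟨s₀, -⟩ : (univ.filter fun s => f x s = f y s).Nonempty := by
    rw [← card_pos, hcol x y hxy]
    exact Nat.mul_pos Fintype.card_pos hlam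
  have : Nonempty S := ⟨s₀⟩
  have hv : Fintype.card X = Fintype.card A * k :=
    Fintype.card_eq_card_mul_of_forall_card_fiber_eq (hk · s₀)
  have hcount := card_mul_sub_one_eq_card_sub_one_mul f x hk fun z hz => hcol z x hz
  have hX : 1 < Fintype.card A * k := hv ▸ Fintype.one_lt_card_iff_nontrivial.mpr ⟨x, y, hxy⟩
  have hk1 : 1 ≤ k := Nat.pos_of_mul_pos_left (a := Fintype.card A) (by omega)
  rw [hv] at hcount
  rify [hk1, hX.le] at hcount hX
  rw [hcol x y hxy, hv]
  push_cast
  rw [div_eq_div_iff (by positivity) (mul_ne_zero (by positivity) (by linarith))]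
  linear_combination (-(Fintype.card A : ℝ)) * hcount

/-- The functional form of a mosaic of `(v,k,λ)` BIBDs is an optimally universal hash
function: every collision probability equals `(v-a)/(a(v-1))`. -/
theorem mosaic_bibd_optimally_universal
    {X S A : Type*} [Fintype X] [Fintype S] [Fintype A] [DecidableEq A]
    (f : X → S → A) (k r lam : ℕ)
    (hlam : 1 ≤ lam)
    (hk : ∀ (α : A) (s : S), (Finset.univ.filter (fun x => f x s = α)).card = k)
    (hr : ∀ (α : A) (x : X), (Finset.univ.filter (fun s => f x s = α)).card = r)
    (hl : ∀ (α : A) (x y : X), x ≠ y →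
      (Finset.univ.filter (fun s => f x s = α ∧ f y s = α)).card = lam) :
    ∀ x y : X, x ≠ y →
      ((Finset.univ.filter (fun s => f x s = f y s)).card : ℝ) / (Fintype.card S : ℝ)
        = ((Fintype.card X : ℝ) - (Fintype.card A : ℝ))
          / ((Fintype.card A : ℝ) * ((Fintype.card X : ℝ) - 1)) :=
  mosaic_bibd_optimally_universal_general f k lam hlam hk hl
end

section
/- Let f: X × S → A be the functional form of a mosaic of (u,m,k,λ₁,λ₂) GDDs with a common point class partition, all of which are semi-regular (i.e., r > λ₁ and rk = vλ₂). Then f is a universal hash function: for all distinct x, x' ∈ X, |{s : f(x,s) = f(x',s)}| / |S| ≤ 1/|A|. -/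
/-!
Fix a colour `α` and a point `x`. Counting the pairs `(w, s)` with `f x s = f w s = α` in two ways
gives the GDD identity `r k = r + (u - 1) λ₁ + (v - u) λ₂`; with semi-regularity `r k = v λ₂` this
becomes `u λ₂ = r + (u - 1) λ₁ > u λ₁`, so `λ₁ < λ₂`. As `v = |A| k`, also `r = |A| λ₂`, while
`|S| = |A| r`. Two distinct points agree on `|A| λ₁` or `|A| λ₂` elements of `S`, hence on at most
`r = |S| / |A|` of them.
-/

open Finset

theorem Fintype.card_eq_card_mul_of_card_fiber_eq {S A : Type*} [Fintype S] [Fintype A]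
    [DecidableEq A] (g : S → A) {r : ℕ} (hr : ∀ α, #{s | g s = α} = r) :
    Fintype.card S = Fintype.card A * r := by
  rw [← card_univ, card_eq_sum_card_fiberwise (f := g) (t := univ)
    (fun _ _ => mem_coe.2 (mem_univ _))]
  simp [hr]

theorem sum_card_filter_eq_and_eq_eq_mul {X S A : Type*} [Fintype X] [Fintype S]
    [DecidableEq A] (f : X → S → A) {k : ℕ} (hk : ∀ α s, #{x | f x s = α} = k)
    (x : X) (α : A) :
    ∑ w, #{s | f x s = α ∧ f w s = α} = #{s | f x s = α} * k := by
  have hcount := sum_card_bipartiteAbove_eq_sum_card_bipartiteBelow (fun w s => f w s = α)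
    (s := (univ : Finset X)) (t := ({s | f x s = α} : Finset S))
  simp only [bipartiteAbove, bipartiteBelow, filter_filter] at hcount
  rw [hcount, sum_const_nat fun s _ => hk α s]

theorem sum_eq_add_of_classwise_const {X : Type*} [Fintype X] {m u : ℕ} (cls : X → Fin m)
    (hu : ∀ i, #{x | cls x = i} = u) (c : X → ℕ) {x : X} {a b : ℕ}
    (ha : ∀ w, w ≠ x → cls w = cls x → c w = a) (hb : ∀ w, cls w ≠ cls x → c w = b) :
    ∑ w, c w = c x + (u - 1) * a + (Fintype.card X - u) * b := by
  classical
  have hx : x ∈ ({w | cls w = cls x} : Finset X) := by simp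
  have hsame : ∑ w ∈ {w | cls w = cls x}, c w = c x + (u - 1) * a := by
    rw [← add_sum_erase _ _ hx, sum_const_nat fun w hw => ?_, card_erase_of_mem hx, hu]
    obtain ⟨hwx, hw⟩ := mem_erase.1 hw
    exact ha w hwx (mem_filter.1 hw).2
  have hdiff : ∑ w ∈ {w | cls w ≠ cls x}, c w = (Fintype.card X - u) * b := by
    rw [sum_const_nat fun w hw => hb w (mem_filter.1 hw).2, filter_not, card_sdiff_of_subset
      (filter_subset _ _), hu, card_univ]
  rw [← sum_filter_add_sum_filter_not univ (fun w => cls w = cls x), hsame, hdiff]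

theorem lt_of_gdd_identity {u v r k l1 l2 : ℕ} (hu : 1 ≤ u) (huv : u ≤ v)
    (hid : r * k = r + (u - 1) * l1 + (v - u) * l2) (hsr : r * k = v * l2) (hl : l1 < r) :
    l1 < l2 := by
  obtain ⟨u, rfl⟩ := Nat.exists_eq_add_of_le' hu
  obtain ⟨t, rfl⟩ := Nat.exists_eq_add_of_le huv
  simp only [Nat.add_sub_cancel, Nat.add_sub_cancel_left] at hid
  nlinarith

section GDD

variable {X S A : Type*} [Fintype X] [Fintype S] [DecidableEq A] (f : X → S → A)
  {u m k r lam1 lam2 : ℕ} (cls : X → Fin m)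

theorem gdd_replication_identity (hu : ∀ i, #{x | cls x = i} = u)
    (hk : ∀ α s, #{x | f x s = α} = k) (hr : ∀ α x, #{s | f x s = α} = r)
    (hl1 : ∀ α x y, x ≠ y → cls x = cls y → #{s | f x s = α ∧ f y s = α} = lam1)
    (hl2 : ∀ α x y, cls x ≠ cls y → #{s | f x s = α ∧ f y s = α} = lam2) (x : X) (α : A) :
    r * k = r + (u - 1) * lam1 + (Fintype.card X - u) * lam2 := by
  rw [← hr α x, ← sum_card_filter_eq_and_eq_eq_mul f hk x α,
    sum_eq_add_of_classwise_const cls hu _ (fun w hwx hw => hl1 α x w (Ne.symm hwx) hw.symm)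
      (fun w hw => hl2 α x w (Ne.symm hw))]
  simp only [and_self]

theorem lam1_lt_lam2_of_semiregular (hu : ∀ i, #{x | cls x = i} = u)
    (hk : ∀ α s, #{x | f x s = α} = k) (hr : ∀ α x, #{s | f x s = α} = r)
    (hl1 : ∀ α x y, x ≠ y → cls x = cls y → #{s | f x s = α ∧ f y s = α} = lam1)
    (hl2 : ∀ α x y, cls x ≠ cls y → #{s | f x s = α ∧ f y s = α} = lam2)
    (hsr1 : lam1 < r) (hsr2 : r * k = Fintype.card X * lam2) (x : X) (α : A) :
    lam1 < lam2 :=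
  lt_of_gdd_identity (hu (cls x) ▸ card_pos.2 ⟨x, by simp⟩)
    (hu (cls x) ▸ card_filter_le _ _) (gdd_replication_identity f cls hu hk hr hl1 hl2 x α)
    hsr2 hsr1

end GDD

theorem cast_div_cast_mul_le_one_div {N a r : ℕ} (h : N ≤ r) :
    (N : ℝ) / ((a * r : ℕ) : ℝ) ≤ 1 / a := by
  obtain rfl | hr := Nat.eq_zero_or_pos r
  · simp [Nat.le_zero.1 h]
  calc (N : ℝ) / ((a * r : ℕ) : ℝ) ≤ r / ((a * r : ℕ) : ℝ) := by gcongr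
    _ = 1 / a := by rw [Nat.cast_mul, div_mul_cancel_right₀ (by positivity), one_div]

theorem mosaic_semiregular_gdd_universal_hash_general
    {X S A : Type*} [Fintype X] [Fintype S] [Fintype A] [DecidableEq A]
    (f : X → S → A) (u m k r lam1 lam2 : ℕ) (cls : X → Fin m)
    (hu : ∀ i : Fin m, (Finset.univ.filter (fun x => cls x = i)).card = u)
    (hk : ∀ (α : A) (s : S), (Finset.univ.filter (fun x => f x s = α)).card = k)
    (hr : ∀ (α : A) (x : X), (Finset.univ.filter (fun s => f x s = α)).card = r)
    (hl1 : ∀ (α : A) (x y : X), x ≠ y → cls x = cls y →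
      (Finset.univ.filter (fun s => f x s = α ∧ f y s = α)).card = lam1)
    (hl2 : ∀ (α : A) (x y : X), cls x ≠ cls y →
      (Finset.univ.filter (fun s => f x s = α ∧ f y s = α)).card = lam2)
    (hsr1 : lam1 < r)
    (hsr2 : r * k = Fintype.card X * lam2) :
    ∀ x y : X, x ≠ y →
      ((Finset.univ.filter (fun s => f x s = f y s)).card : ℝ) / (Fintype.card S : ℝ)
        ≤ 1 / (Fintype.card A : ℝ) := by
  intro x y hxy
  rcases isEmpty_or_nonempty S with _ | ⟨⟨s₀⟩⟩
  · simp
  have hS := Fintype.card_eq_card_mul_of_card_fiber_eq (f x) (hr · x)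
  have hX := Fintype.card_eq_card_mul_of_card_fiber_eq (f · s₀) (hk · s₀)
  have hk₀ : 0 < k := hk (f x s₀) s₀ ▸ card_pos.2 ⟨x, by simp⟩
  have hrA : r = Fintype.card A * lam2 :=
    Nat.eq_of_mul_eq_mul_right hk₀ (by rw [hsr2, hX]; ring)
  have hlt := lam1_lt_lam2_of_semiregular f cls hu hk hr hl1 hl2 hsr1 hsr2 x (f x s₀)
  have hagree : #{s | f x s = f y s} ≤ r := by
    rw [card_filter_eq_eq_sum_card_filter_and, hrA, ← smul_eq_mul]
    refine sum_le_card_nsmul _ _ _ fun α _ => ?_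
    by_cases hc : cls x = cls y
    · exact (hl1 α x y hxy hc).le.trans hlt.le
    · exact (hl2 α x y hc).le
  rw [hS]
  exact cast_div_cast_mul_le_one_div hagree

/-- The functional form of a mosaic of semi-regular `(u,m,k,λ₁,λ₂)` GDDs with a common
point class partition is a universal hash function. -/
theorem mosaic_semiregular_gdd_universal_hash
    {X S A : Type*} [Fintype X] [Fintype S] [Fintype A] [DecidableEq A]
    (f : X → S → A) (u m k r lam1 lam2 : ℕ) (cls : X → Fin m)
    (hu : ∀ i : Fin m, (Finset.univ.filter (fun x => cls x = i)).card = u)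
    (hlam2 : 1 ≤ lam2)
    (hk : ∀ (α : A) (s : S), (Finset.univ.filter (fun x => f x s = α)).card = k)
    (hr : ∀ (α : A) (x : X), (Finset.univ.filter (fun s => f x s = α)).card = r)
    (hl1 : ∀ (α : A) (x y : X), x ≠ y → cls x = cls y →
      (Finset.univ.filter (fun s => f x s = α ∧ f y s = α)).card = lam1)
    (hl2 : ∀ (α : A) (x y : X), cls x ≠ cls y →
      (Finset.univ.filter (fun s => f x s = α ∧ f y s = α)).card = lam2)
    (hsr1 : lam1 < r)
    (hsr2 : r * k = Fintype.card X * lam2) :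
    ∀ x y : X, x ≠ y →
      ((Finset.univ.filter (fun s => f x s = f y s)).card : ℝ) / (Fintype.card S : ℝ)
        ≤ 1 / (Fintype.card A : ℝ) :=
  mosaic_semiregular_gdd_universal_hash_general f u m k r lam1 lam2 cls hu hk hr hl1 hl2 hsr1 hsr2
end

section
/- A (u,m,k,λ₁,λ₂) semi-regular GDD satisfies λ₁ ≤ λ₂. -/
/-!
Fix a point `x` and count the pairs `(y, B)` with `x, y ∈ B`: by blocks this is `r * k`, by points
it is `r + (u - 1) * λ₁ + (v - u) * λ₂`. Semi-regularity `r * k = v * λ₂` turns this into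
`r + (u - 1) * λ₁ = u * λ₂`, and `λ₁ < r` then forces `u * λ₁ < u * λ₂`.
-/

open Finset

section Incidence

variable {X S : Type*} [Fintype X] [Fintype S] (I : X → S → Prop) [∀ x s, Decidable (I x s)]

theorem sum_card_filter_and_eq_card_mul {k : ℕ} (hk : ∀ s, #{x | I x s} = k) (x : X) :
    ∑ y, #{s | I x s ∧ I y s} = #{s | I x s} * k := by
  have hdouble := sum_card_bipartiteAbove_eq_sum_card_bipartiteBelow
    (fun y s => I y s) (s := (univ : Finset X)) (t := {s | I x s})
  simp only [bipartiteAbove, bipartiteBelow, filter_filter] at hdouble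
  rw [hdouble, sum_const_nat fun s _ => hk s]

theorem sum_card_filter_and_eq_of_classes [DecidableEq X] {α : Type*} [DecidableEq α]
    (cls : X → α) {lam1 lam2 : ℕ}
    (hl1 : ∀ x y, x ≠ y → cls x = cls y → #{s | I x s ∧ I y s} = lam1)
    (hl2 : ∀ x y, cls x ≠ cls y → #{s | I x s ∧ I y s} = lam2) (x : X) :
    ∑ y, #{s | I x s ∧ I y s} =
      #{s | I x s} + (#{y | cls y = cls x} - 1) * lam1
        + (Fintype.card X - #{y | cls y = cls x}) * lam2 := by
  have hx : x ∈ ({y | cls y = cls x} : Finset X) := by simp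
  have hsame : ∑ y ∈ {y | cls y = cls x}, #{s | I x s ∧ I y s} =
      #{s | I x s} + (#{y | cls y = cls x} - 1) * lam1 := by
    rw [← add_sum_erase _ _ hx, filter_congr fun s _ => and_self_iff,
      sum_const_nat fun y hy =>
        hl1 x y (ne_of_mem_erase hy).symm (mem_filter.1 (mem_of_mem_erase hy)).2.symm,
      card_erase_of_mem hx]
  have hother : ∑ y ∈ {y | ¬cls y = cls x}, #{s | I x s ∧ I y s} =
      (Fintype.card X - #{y | cls y = cls x}) * lam2 := by
    rw [sum_const_nat fun y hy => hl2 x y (Ne.symm (mem_filter.1 hy).2),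
      filter_not, card_sdiff_of_subset (filter_subset _ _), card_univ]
  rw [← sum_filter_add_sum_filter_not univ fun y => cls y = cls x, hsame, hother]

end Incidence

theorem lt_of_add_mul_add_mul_eq_mul {u v r lam1 lam2 : ℕ} (hu : 1 ≤ u) (huv : u ≤ v)
    (hlam1 : lam1 < r) (h : r + (u - 1) * lam1 + (v - u) * lam2 = v * lam2) :
    lam1 < lam2 := by
  obtain ⟨u, rfl⟩ := Nat.exists_eq_add_of_le' hu
  obtain ⟨w, rfl⟩ := Nat.exists_eq_add_of_le huv
  simp only [Nat.add_sub_cancel, Nat.add_sub_cancel_left] at h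
  nlinarith

theorem semiregular_gdd_lambda_le_general
    {X S : Type*} [Fintype X] [Fintype S] [Nonempty X]
    (I : X → S → Prop) [∀ x s, Decidable (I x s)]
    (u m k r lam1 lam2 : ℕ) (cls : X → Fin m)
    (hu : ∀ i : Fin m, (Finset.univ.filter (fun x => cls x = i)).card = u)
    (hk : ∀ s : S, (Finset.univ.filter (fun x => I x s)).card = k)
    (hr : ∀ x : X, (Finset.univ.filter (fun s => I x s)).card = r)
    (hl1 : ∀ x y : X, x ≠ y → cls x = cls y →
      (Finset.univ.filter (fun s => I x s ∧ I y s)).card = lam1)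
    (hl2 : ∀ x y : X, cls x ≠ cls y →
      (Finset.univ.filter (fun s => I x s ∧ I y s)).card = lam2)
    (hsr1 : lam1 < r)
    (hsr2 : r * k = Fintype.card X * lam2) :
    lam1 ≤ lam2 := by
  classical
  obtain ⟨x⟩ := ‹Nonempty X›
  have hcount := (sum_card_filter_and_eq_card_mul I hk x).symm.trans
    (sum_card_filter_and_eq_of_classes I cls hl1 hl2 x)
  rw [hr, hu, hsr2] at hcount
  have hu_pos : 1 ≤ u := hu (cls x) ▸ card_pos.2 ⟨x, by simp⟩
  have hu_le : u ≤ Fintype.card X := hu (cls x) ▸ card_le_univ _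
  exact (lt_of_add_mul_add_mul_eq_mul hu_pos hu_le hsr1 hcount.symm).le

/-- A `(u,m,k,λ₁,λ₂)` semi-regular GDD satisfies `λ₁ ≤ λ₂`. -/
theorem semiregular_gdd_lambda_le
    {X S : Type*} [Fintype X] [Fintype S] [Nonempty X]
    (I : X → S → Prop) [∀ x s, Decidable (I x s)]
    (u m k r lam1 lam2 : ℕ) (cls : X → Fin m)
    (hu : ∀ i : Fin m, (Finset.univ.filter (fun x => cls x = i)).card = u)
    (hlam2 : 1 ≤ lam2)
    (hk : ∀ s : S, (Finset.univ.filter (fun x => I x s)).card = k)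
    (hr : ∀ x : X, (Finset.univ.filter (fun s => I x s)).card = r)
    (hl1 : ∀ x y : X, x ≠ y → cls x = cls y →
      (Finset.univ.filter (fun s => I x s ∧ I y s)).card = lam1)
    (hl2 : ∀ x y : X, cls x ≠ cls y →
      (Finset.univ.filter (fun s => I x s ∧ I y s)).card = lam2)
    (hsr1 : lam1 < r)
    (hsr2 : r * k = Fintype.card X * lam2) :
    lam1 ≤ lam2 :=
  semiregular_gdd_lambda_le_general I u m k r lam1 lam2 cls hu hk hr hl1 hl2 hsr1 hsr2
end

section
/- Let W: X → Z be a channel (stochastic matrix) and Π = {X₁,…,X_m} a partition of X into sets of size u, with R_Π: Π → X the channel sending X_i to the uniform distribution on X_i, P_X the uniform distribution on X and P_Π the uniform distribution on Π. Then D₂(W ‖ P_X W | P_X) − log u ≤ D₂(R_Π W ‖ P_X W | P_Π) ≤ D₂(W ‖ P_X W | P_X), where D₂(V‖Q|P) = log Σ_x P(x) exp(D₂(V(·|x)‖Q)) and D₂(P‖Q) = log Σ_z P(z)²/Q(z). -/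
/-!
Write `A` and `B` for the arguments of the two logarithms. For each class `Π_i` and output `z`,
the mean over `Π_i` of the squares `W(z|x)²` dominates the square of the mean `(R_Π W)(z|i)`
(Cauchy–Schwarz), and, the entries being nonnegative, is at most `u` times it, since
`∑ a² ≤ (∑ a)²`. Averaging the class means of `W(z|x)² / (P_X W)(z)` over the classes gives back `A`,
so `B ≤ A ≤ u B`, and taking logarithms gives both inequalities.
-/

/-- Output distribution of the channel `W` under uniform input. -/
noncomputable def uniformOutput {X Z : Type*} [Fintype X]
    (W : X → Z → ℝ) (z : Z) : ℝ :=
  (1 / (Fintype.card X : ℝ)) * ∑ x, W x z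

/-- Conditional Rényi 2-divergence `D₂(W ‖ P_X W | P_X)` of the channel `W` against its
uniform-input output distribution, with uniform input distribution (base-2 logarithm;
the inner sum runs over outputs of positive probability). -/
noncomputable def renyiTwoDivChannel {X Z : Type*} [Fintype X] [Fintype Z]
    (W : X → Z → ℝ) : ℝ :=
  Real.logb 2 (∑ x : X, (1 / (Fintype.card X : ℝ)) *
    ∑ z ∈ Finset.univ.filter (fun z => 0 < uniformOutput W z),
      (W x z) ^ 2 / uniformOutput W z)

/-- Conditional Rényi 2-divergence `D₂(R_Π W ‖ P_X W | P_Π)` of the class-averaged channel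
`R_Π W` against the uniform-input output distribution of `W`, with uniform distribution on
the partition `Π` given by `cls` (classes of size `u`). -/
noncomputable def renyiTwoDivClassChannel {X Z : Type*} [Fintype X] [Fintype Z]
    (W : X → Z → ℝ) (m u : ℕ) (cls : X → Fin m) : ℝ :=
  Real.logb 2 (∑ i : Fin m, (1 / (m : ℝ)) *
    ∑ z ∈ Finset.univ.filter (fun z => 0 < uniformOutput W z),
      ((1 / (u : ℝ)) * ∑ x ∈ Finset.univ.filter (fun x => cls x = i), W x z) ^ 2
        / uniformOutput W z)

open Finset

namespace Real

theorem logb_sub_logb_natCast_le_logb_and_logb_le_logb {b A B : ℝ} {c : ℕ} (hb : 1 < b)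
    (hB : 0 ≤ B) (hBA : B ≤ A) (hAB : A ≤ c * B) :
    logb b A - logb b c ≤ logb b B ∧ logb b B ≤ logb b A := by
  have hc : 0 ≤ logb b c := div_nonneg (log_natCast_nonneg c) (log_nonneg hb.le)
  rcases hB.eq_or_lt with rfl | hBpos
  · obtain rfl : A = 0 := le_antisymm (by simpa using hAB) hBA
    simpa using hc
  have hcB : 0 < (c : ℝ) * B := hBpos.trans_le (hBA.trans hAB)
  have hcpos : (0 : ℝ) < c := pos_of_mul_pos_left hcB hBpos.le
  refine ⟨?_, logb_le_logb_of_le hb hBpos hBA⟩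
  have := logb_le_logb_of_le hb (hBpos.trans_le hBA) hAB
  rw [logb_mul hcpos.ne' hBpos.ne'] at this
  linarith

end Real

section ClassAverage

variable {ι κ : Type*} {t : Finset ι} {s : Finset κ} {Q : κ → ℝ} {V : ι → κ → ℝ} {u : ℕ}

theorem sum_sq_mean_div_le_sum_mean_sq_div (ht : #t = u) (hQ : ∀ z ∈ s, 0 ≤ Q z) :
    ∑ z ∈ s, ((1 / (u : ℝ)) * ∑ x ∈ t, V x z) ^ 2 / Q z
      ≤ ∑ z ∈ s, ((1 / (u : ℝ)) * ∑ x ∈ t, V x z ^ 2) / Q z := by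
  subst ht
  refine sum_le_sum fun z hz => div_le_div_of_nonneg_right ?_ (hQ z hz)
  simpa only [one_div_mul_eq_div] using sum_div_card_sq_le_sum_sq_div_card

theorem sum_mean_sq_div_le_mul_sum_sq_mean_div (hQ : ∀ z ∈ s, 0 ≤ Q z)
    (hV : ∀ x ∈ t, ∀ z ∈ s, 0 ≤ V x z) :
    ∑ z ∈ s, ((1 / (u : ℝ)) * ∑ x ∈ t, V x z ^ 2) / Q z
      ≤ u * ∑ z ∈ s, ((1 / (u : ℝ)) * ∑ x ∈ t, V x z) ^ 2 / Q z := by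
  rw [mul_sum]
  refine sum_le_sum fun z hz => ?_
  rw [← mul_div_assoc]
  refine div_le_div_of_nonneg_right ?_ (hQ z hz)
  calc (1 / (u : ℝ)) * ∑ x ∈ t, V x z ^ 2
      ≤ (1 / (u : ℝ)) * (∑ x ∈ t, V x z) ^ 2 :=
        mul_le_mul_of_nonneg_left (sum_sq_le_sq_sum_of_nonneg fun x hx => hV x hx z hz)
          (by positivity)
    _ = u * ((1 / (u : ℝ)) * ∑ x ∈ t, V x z) ^ 2 := by
        rcases eq_or_ne (u : ℝ) 0 with hu | hu
        · simp [hu]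
        · field_simp

end ClassAverage

theorem sum_mul_sum_div_comm {ι κ : Type*} (s : Finset κ) (t : Finset ι) (f : ι → κ → ℝ)
    (Q : κ → ℝ) (a : ℝ) :
    ∑ z ∈ s, (a * ∑ x ∈ t, f x z) / Q z = a * ∑ x ∈ t, ∑ z ∈ s, f x z / Q z := by
  simp only [mul_sum, sum_div, mul_div_assoc]
  exact sum_comm

theorem Fintype.card_eq_mul_of_card_fiber {X : Type*} [Fintype X] {m u : ℕ} (cls : X → Fin m)
    (hu : ∀ i, #{x | cls x = i} = u) : Fintype.card X = m * u := by
  rw [← card_univ, card_eq_sum_card_fiberwise (f := cls) (t := univ) fun x _ => mem_univ _]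
  simp [hu]

theorem sum_fiber_means_eq_mean {X : Type*} [Fintype X] {m u : ℕ} (cls : X → Fin m)
    (hu : ∀ i, #{x | cls x = i} = u) (g : X → ℝ) :
    ∑ i, (1 / (m : ℝ)) * ((1 / (u : ℝ)) * ∑ x with cls x = i, g x)
      = ∑ x, (1 / (Fintype.card X : ℝ)) * g x := by
  simp only [← mul_sum, sum_fiberwise, ← mul_assoc, one_div_mul_one_div,
    Fintype.card_eq_mul_of_card_fiber cls hu, Nat.cast_mul]

theorem renyiTwoDiv_class_sandwich_general
    {X Z : Type*} [Fintype X] [Fintype Z]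
    (W : X → Z → ℝ) (hW0 : ∀ x z, 0 ≤ W x z)
    (m u : ℕ) (cls : X → Fin m)
    (hu : ∀ i : Fin m, (Finset.univ.filter (fun x => cls x = i)).card = u) :
    renyiTwoDivChannel W - Real.logb 2 u ≤ renyiTwoDivClassChannel W m u cls
      ∧ renyiTwoDivClassChannel W m u cls ≤ renyiTwoDivChannel W := by
  set S : Finset Z := {z | 0 < uniformOutput W z}
  have hQ : ∀ z ∈ S, 0 ≤ uniformOutput W z := fun z hz => (mem_filter.mp hz).2.le
  have hmean : ∑ i, (1 / (m : ℝ)) * ∑ z ∈ S,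
        ((1 / (u : ℝ)) * ∑ x with cls x = i, W x z ^ 2) / uniformOutput W z
      = ∑ x, (1 / (Fintype.card X : ℝ)) * ∑ z ∈ S, W x z ^ 2 / uniformOutput W z := by
    simp only [sum_mul_sum_div_comm]
    exact sum_fiber_means_eq_mean cls hu _
  refine Real.logb_sub_logb_natCast_le_logb_and_logb_le_logb one_lt_two ?_ ?_ ?_
  · exact sum_nonneg fun i _ => mul_nonneg (by positivity)
      (sum_nonneg fun z hz => div_nonneg (sq_nonneg _) (hQ z hz))
  · rw [← hmean]
    exact sum_le_sum fun i _ => mul_le_mul_of_nonneg_left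
      (sum_sq_mean_div_le_sum_mean_sq_div (hu i) hQ) (by positivity)
  · rw [← hmean, mul_sum]
    refine sum_le_sum fun i _ => ?_
    rw [mul_left_comm]
    exact mul_le_mul_of_nonneg_left
      (sum_mean_sq_div_le_mul_sum_sq_mean_div hQ fun x _ z _ => hW0 x z) (by positivity)

/-- For a channel `W : X → Z` and a partition `Π` of `X` into `m` classes of size `u`,
`D₂(W‖P_X W|P_X) − log u ≤ D₂(R_Π W‖P_X W|P_Π) ≤ D₂(W‖P_X W|P_X)`. -/
theorem renyiTwoDiv_class_sandwich
    {X Z : Type*} [Fintype X] [Fintype Z] [Nonempty X]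
    (W : X → Z → ℝ) (hW0 : ∀ x z, 0 ≤ W x z) (hW1 : ∀ x, ∑ z, W x z = 1)
    (m u : ℕ) (cls : X → Fin m)
    (hu : ∀ i : Fin m, (Finset.univ.filter (fun x => cls x = i)).card = u) :
    renyiTwoDivChannel W - Real.logb 2 u ≤ renyiTwoDivClassChannel W m u cls
      ∧ renyiTwoDivClassChannel W m u cls ≤ renyiTwoDivChannel W :=
  renyiTwoDiv_class_sandwich_general W hW0 m u cls hu
end

section
/- Let N be the incidence matrix of a (u,m,k,λ₁,λ₂) GDD with point set X of size v = um, block index set S of size b, replication number r, and point class partition Π. Let P_{XZ} be a joint distribution on X × Z with full marginal support on Z, and define P(x,z,s) = (1/r) P_{XZ}(x,z) N(x,s). Then for every z ∈ Z, exp(D₂(P_{S|Z=z} ‖ uniform on S)) = (v(r−λ₁)/(kr)) · 2^{−H₂(X|Z=z)} + (v(λ₁−λ₂)/(kr)) · 2^{−H₂(X_Π|Z=z)} + (1 − ((r−λ₁)+(λ₁−λ₂)u)/(kr)), where H₂(X|Z=z) = −log Σ_x P_{X|Z}(x|z)² and X_Π is the point-class coarsening of X. -/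
/-!
Expanding the square, `∑ s, (∑ x ∈ s, p x) ^ 2 = pᵀ N Nᵀ p`, and the GDD relation
`N Nᵀ = (r - λ₁) I + (λ₁ - λ₂) C + λ₂ J` turns it into
`(r - λ₁) ∑ x, p x ^ 2 + (λ₁ - λ₂) ∑ i, p(Xᵢ) ^ 2 + λ₂ (∑ x, p x) ^ 2`.
The same bilinear identity, applied to a point indicator and the all-ones vector, gives
`k r = (r - λ₁) + (λ₁ - λ₂) u + λ₂ v`; with `b k = v r` the claim is a rearrangement.
-/

open Finset

theorem sum_sum_ite_eq_sum_fiber_mul_sum_fiber {X ι R : Type*} [Fintype X] [Fintype ι]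
    [DecidableEq ι] [CommSemiring R] (f : X → ι) (p q : X → R) :
    ∑ x, ∑ y, (if f x = f y then p x * q y else 0)
      = ∑ i, (∑ x with f x = i, p x) * (∑ y with f y = i, q y) := by
  simp only [sum_mul_sum]
  rw [← sum_fiberwise univ f]
  refine sum_congr rfl fun i _ => sum_congr rfl fun x hx => ?_
  rw [(mem_filter.1 hx).2, sum_filter]
  simp only [eq_comm]

namespace BlockDesign

variable {X S : Type*} [Fintype S] (I : X → S → Prop) [∀ x s, Decidable (I x s)]

def pairCount (x y : X) : ℕ := #{s | I x s ∧ I y s}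

theorem card_mul_eq_card_mul_of_regular [Fintype X] {k r : ℕ} (hk : ∀ s, #{x | I x s} = k)
    (hr : ∀ x, #{s | I x s} = r) : Fintype.card S * k = Fintype.card X * r := by
  have h : ∑ s, #{x | I x s} = ∑ x, #{s | I x s} := by
    simp only [card_filter]
    exact sum_comm
  simpa [hk, hr] using h

theorem sum_blockSum_mul_blockSum [Fintype X] {R : Type*} [CommSemiring R] (p q : X → R) :
    ∑ s, (∑ x with I x s, p x) * (∑ y with I y s, q y)
      = ∑ x, ∑ y, (pairCount I x y : R) * (p x * q y) := by
  simp only [sum_filter, sum_mul_sum, ite_zero_mul_ite_zero]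
  rw [sum_comm]
  refine sum_congr rfl fun x _ => ?_
  rw [sum_comm]
  refine sum_congr rfl fun y _ => ?_
  rw [← sum_filter, sum_const, nsmul_eq_mul, pairCount]

variable [DecidableEq X] {ι : Type*} [DecidableEq ι] {cls : X → ι} {r lam1 lam2 : ℕ}

theorem pairCount_eq_of_gdd {R : Type*} [CommRing R] (hr : ∀ x, #{s | I x s} = r)
    (hl1 : ∀ x y, x ≠ y → cls x = cls y → pairCount I x y = lam1)
    (hl2 : ∀ x y, cls x ≠ cls y → pairCount I x y = lam2) (x y : X) :
    (pairCount I x y : R) = lam2 + (lam1 - lam2) * (if cls x = cls y then 1 else 0)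
      + (r - lam1) * (if x = y then 1 else 0) := by
  by_cases hxy : x = y
  · subst hxy
    simp [pairCount, hr]
  by_cases hc : cls x = cls y
  · simp [hl1 x y hxy hc, hc, hxy]
  · simp [hl2 x y hc, hc, hxy]

theorem sum_blockSum_mul_blockSum_of_gdd [Fintype X] [Fintype ι] {R : Type*} [CommRing R]
    (hr : ∀ x, #{s | I x s} = r)
    (hl1 : ∀ x y, x ≠ y → cls x = cls y → pairCount I x y = lam1)
    (hl2 : ∀ x y, cls x ≠ cls y → pairCount I x y = lam2) (p q : X → R) :
    ∑ s, (∑ x with I x s, p x) * (∑ y with I y s, q y)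
      = (r - lam1) * ∑ x, p x * q x
        + (lam1 - lam2) * ∑ i, (∑ x with cls x = i, p x) * (∑ y with cls y = i, q y)
        + lam2 * ((∑ x, p x) * ∑ y, q y) := by
  rw [sum_blockSum_mul_blockSum, ← sum_sum_ite_eq_sum_fiber_mul_sum_fiber, sum_mul_sum]
  simp only [pairCount_eq_of_gdd I hr hl1 hl2, mul_sum, ← sum_add_distrib]
  refine sum_congr rfl fun x _ => ?_
  have hdiag : (r - lam1 : R) * (p x * q x)
      = ∑ y, if x = y then (r - lam1 : R) * (p x * q y) else 0 := by
    simp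
  rw [hdiag, ← sum_add_distrib, ← sum_add_distrib]
  refine sum_congr rfl fun y _ => ?_
  split_ifs <;> simp_all <;> ring

theorem mul_eq_of_gdd [Fintype X] [Fintype ι] {R : Type*} [CommRing R] {u k : ℕ}
    (hu : ∀ i, #{x | cls x = i} = u) (hk : ∀ s, #{x | I x s} = k) (hr : ∀ x, #{s | I x s} = r)
    (hl1 : ∀ x y, x ≠ y → cls x = cls y → pairCount I x y = lam1)
    (hl2 : ∀ x y, cls x ≠ cls y → pairCount I x y = lam2) (x₀ : X) :
    (k * r : R) = (r - lam1) + (lam1 - lam2) * u + lam2 * Fintype.card X := by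
  have h := sum_blockSum_mul_blockSum_of_gdd I hr hl1 hl2
    (fun x => if x = x₀ then (1 : R) else 0) (fun _ => 1)
  simp only [sum_ite_eq', mem_filter, mem_univ, true_and, mul_one, sum_const, nsmul_eq_mul,
    hk, hu, ite_mul, one_mul, zero_mul, if_true, sum_ite_eq, card_univ] at h
  rw [← h, ← sum_filter, sum_const, hr, nsmul_eq_mul, mul_comm]

end BlockDesign

theorem gdd_privacy_amplification_renyi_identity_general
    {X S Z : Type*} [Fintype X] [Fintype S]
    (I : X → S → Prop) [∀ x s, Decidable (I x s)]
    (u m k r lam1 lam2 : ℕ) (cls : X → Fin m)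
    (hu : ∀ i : Fin m, (Finset.univ.filter (fun x => cls x = i)).card = u)
    (hk : ∀ s : S, (Finset.univ.filter (fun x => I x s)).card = k)
    (hr : ∀ x : X, (Finset.univ.filter (fun s => I x s)).card = r)
    (hl1 : ∀ x y : X, x ≠ y → cls x = cls y →
      (Finset.univ.filter (fun s => I x s ∧ I y s)).card = lam1)
    (hl2 : ∀ x y : X, cls x ≠ cls y →
      (Finset.univ.filter (fun s => I x s ∧ I y s)).card = lam2)
    (hk0 : 0 < k) (hr0 : 0 < r)
    (P : X → Z → ℝ)
    (hZ : ∀ z : Z, 0 < ∑ x, P x z) :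
    ∀ z : Z,
      (Fintype.card S : ℝ) * ∑ s : S,
          ((∑ x ∈ Finset.univ.filter (fun x => I x s), P x z)
            / ((r : ℝ) * ∑ x, P x z)) ^ 2
        = ((Fintype.card X : ℝ) * ((r : ℝ) - (lam1 : ℝ)) / ((k : ℝ) * (r : ℝ)))
              * ∑ x, (P x z / ∑ x', P x' z) ^ 2
          + ((Fintype.card X : ℝ) * ((lam1 : ℝ) - (lam2 : ℝ)) / ((k : ℝ) * (r : ℝ)))
              * ∑ i : Fin m,
                  ((∑ x ∈ Finset.univ.filter (fun x => cls x = i), P x z)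
                    / ∑ x', P x' z) ^ 2
          + (1 - (((r : ℝ) - (lam1 : ℝ)) + ((lam1 : ℝ) - (lam2 : ℝ)) * (u : ℝ))
              / ((k : ℝ) * (r : ℝ))) := by
  classical
  intro z
  have hT := hZ z
  obtain ⟨x₀⟩ : Nonempty X := by
    by_contra hX
    simp [not_nonempty_iff.1 hX] at hT
  have hk' : (k : ℝ) ≠ 0 := by positivity
  have hr' : (r : ℝ) ≠ 0 := by positivity
  have hb : (Fintype.card S : ℝ) = Fintype.card X * r / k := by
    rw [eq_div_iff hk']
    exact_mod_cast BlockDesign.card_mul_eq_card_mul_of_regular I hk hr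
  have hconst : 1 - ((r - lam1 : ℝ) + (lam1 - lam2) * u) / (k * r)
      = lam2 * Fintype.card X / (k * r) := by
    field_simp
    linear_combination BlockDesign.mul_eq_of_gdd (R := ℝ) I hu hk hr hl1 hl2 x₀
  have hsq := BlockDesign.sum_blockSum_mul_blockSum_of_gdd I hr hl1 hl2 (P · z) (P · z)
  simp only [← sq] at hsq
  rw [hconst, hb]
  simp only [div_pow, ← sum_div, hsq]
  field_simp

/-- Privacy amplification, one design at a time: for the incidence matrix of a
`(u,m,k,λ₁,λ₂)` GDD, the conditional seed distribution given `Z = z` satisfies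
`exp₂(D₂(P_{S|Z=z} ‖ unif_S)) = (v(r−λ₁)/(kr)) 2^{−H₂(X|Z=z)}
  + (v(λ₁−λ₂)/(kr)) 2^{−H₂(X_Π|Z=z)} + (1 − ((r−λ₁)+(λ₁−λ₂)u)/(kr))`. -/
theorem gdd_privacy_amplification_renyi_identity
    {X S Z : Type*} [Fintype X] [Fintype S] [Fintype Z]
    (I : X → S → Prop) [∀ x s, Decidable (I x s)]
    (u m k r lam1 lam2 : ℕ) (cls : X → Fin m)
    (hu : ∀ i : Fin m, (Finset.univ.filter (fun x => cls x = i)).card = u)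
    (hlam2 : 1 ≤ lam2)
    (hk : ∀ s : S, (Finset.univ.filter (fun x => I x s)).card = k)
    (hr : ∀ x : X, (Finset.univ.filter (fun s => I x s)).card = r)
    (hl1 : ∀ x y : X, x ≠ y → cls x = cls y →
      (Finset.univ.filter (fun s => I x s ∧ I y s)).card = lam1)
    (hl2 : ∀ x y : X, cls x ≠ cls y →
      (Finset.univ.filter (fun s => I x s ∧ I y s)).card = lam2)
    (hk0 : 0 < k) (hr0 : 0 < r)
    (P : X → Z → ℝ) (hP0 : ∀ x z, 0 ≤ P x z) (hP1 : ∑ x, ∑ z, P x z = 1)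
    (hZ : ∀ z : Z, 0 < ∑ x, P x z) :
    ∀ z : Z,
      (Fintype.card S : ℝ) * ∑ s : S,
          ((∑ x ∈ Finset.univ.filter (fun x => I x s), P x z)
            / ((r : ℝ) * ∑ x, P x z)) ^ 2
        = ((Fintype.card X : ℝ) * ((r : ℝ) - (lam1 : ℝ)) / ((k : ℝ) * (r : ℝ)))
              * ∑ x, (P x z / ∑ x', P x' z) ^ 2
          + ((Fintype.card X : ℝ) * ((lam1 : ℝ) - (lam2 : ℝ)) / ((k : ℝ) * (r : ℝ)))
              * ∑ i : Fin m,
                  ((∑ x ∈ Finset.univ.filter (fun x => cls x = i), P x z)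
                    / ∑ x', P x' z) ^ 2
          + (1 - (((r : ℝ) - (lam1 : ℝ)) + ((lam1 : ℝ) - (lam2 : ℝ)) * (u : ℝ))
              / ((k : ℝ) * (r : ℝ))) :=
  gdd_privacy_amplification_renyi_identity_general I u m k r lam1 lam2 cls hu hk hr hl1 hl2 hk0 hr0
    P hZ
end
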